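/- Fix two atomic propositions A and B. There is no CTL formula φ' such that for every Kripke structure S and every state q of S: q ⊨ φ' iff every finite run prefix σ starting from q satisfies #B(σ) ≤ #A(σ). In other words, the CCTL±1 formula AG_{#A−#B<0} ⊥ (which holds at q iff no finite run prefix from q contains strictly more B-states than A-states) cannot be translated into CTL. -/

import Mathlib

open scoped Classical

noncomputable section

/-- A Kripke structure over atomic propositions indexed by `ℕ`;
proposition `0` plays the role of `A` and proposition `1` of `B`. -/
structure Kripke (Q : Type) where
  R : Q → Q → Prop
  total : ∀ q, ∃ q', R q q'
  label : Q → ℕ → Prop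

/-- An (infinite) run of a Kripke structure. -/
def Kripke.Run {Q : Type} (S : Kripke Q) (ρ : ℕ → Q) : Prop :=
  ∀ i, S.R (ρ i) (ρ (i + 1))

/-- The finite prefix `ρ(0) ⋯ ρ(n-1)` of a run (`n` states). -/
def runPrefix {Q : Type} (ρ : ℕ → Q) (n : ℕ) : List Q :=
  (List.range n).map ρ

/-- The number of states of a finite prefix satisfying a predicate. -/
def countSat {Q : Type} (p : Q → Prop) : List Q → ℕ
  | [] => 0
  | s :: t => (if p s then 1 else 0) + countSat p t

/-- CTL formulas. -/
inductive CTL : Type where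
  | atom : ℕ → CTL
  | and : CTL → CTL → CTL
  | not : CTL → CTL
  | eu : CTL → CTL → CTL
  | au : CTL → CTL → CTL

/-- Satisfaction of a CTL formula at a state. -/
def CTL.sat {Q : Type} (S : Kripke Q) : CTL → Q → Prop
  | .atom p, q => S.label q p
  | .and φ ψ, q => CTL.sat S φ q ∧ CTL.sat S ψ q
  | .not φ, q => ¬ CTL.sat S φ q
  | .eu φ ψ, q => ∃ ρ, S.Run ρ ∧ ρ 0 = q ∧
      ∃ i, CTL.sat S ψ (ρ i) ∧ ∀ j < i, CTL.sat S φ (ρ j)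
  | .au φ ψ, q => ∀ ρ, S.Run ρ → ρ 0 = q →
      ∃ i, CTL.sat S ψ (ρ i) ∧ ∀ j < i, CTL.sat S φ (ρ j)

namespace NoCTLAux

/-- States of the counterexample structure. -/
inductive St : Type
  | a1 | a2 | b | b1 | b2 | c
deriving DecidableEq

instance : Fintype St where
  elems := {.a1, .a2, .b, .b1, .b2, .c}
  complete := fun x => by cases x <;> simp

/-- Deterministic successor. -/
def nxt : St → St
  | .a1 => .b
  | .a2 => .b1
  | .b  => .c
  | .b1 => .b2
  | .b2 => .c
  | .c  => .c

/-- Labels: `a1, a2` satisfy prop `0` (A); `b, b1, b2` satisfy prop `1` (B). -/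
def lab : St → ℕ → Prop
  | .a1, p => p = 0
  | .a2, p => p = 0
  | .b,  p => p = 1
  | .b1, p => p = 1
  | .b2, p => p = 1
  | .c,  _ => False

def K : Kripke St := ⟨fun x y => nxt x = y, fun q => ⟨nxt q, rfl⟩, lab⟩

/-- The unique run from `q`. -/
def seq (q : St) (i : ℕ) : St := nxt^[i] q

lemma seq_run (q : St) : K.Run (seq q) := fun i => by
  show nxt (nxt^[i] q) = nxt^[i+1] q
  rw [Function.iterate_succ_apply']

lemma run_eq {ρ : ℕ → St} (h : K.Run ρ) : ∀ i, ρ i = seq (ρ 0) i := by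
  intro i
  induction i with
  | zero => rfl
  | succ n ih =>
    have hn : nxt (ρ n) = ρ (n+1) := h n
    rw [← hn, ih]
    show nxt (nxt^[n] (ρ 0)) = nxt^[n+1] (ρ 0)
    rw [Function.iterate_succ_apply']

lemma seq_c (n : ℕ) : seq .c n = .c := by
  induction n with
  | zero => rfl
  | succ n ih =>
    show nxt^[n+1] St.c = St.c
    rw [Function.iterate_succ_apply']
    show nxt (seq .c n) = St.c
    rw [ih]; rfl

lemma seq_b (n : ℕ) : seq .b (n+1) = .c := by
  show nxt^[n+1] St.b = St.c
  rw [Function.iterate_succ_apply]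
  exact seq_c n

lemma seq_b2 (n : ℕ) : seq .b2 (n+1) = .c := by
  show nxt^[n+1] St.b2 = St.c
  rw [Function.iterate_succ_apply]
  exact seq_c n

lemma seq_b1_one : seq .b1 1 = .b2 := rfl

lemma seq_b1 (n : ℕ) : seq .b1 (n+2) = .c := by
  show nxt^[n+2] St.b1 = St.c
  rw [Function.iterate_succ_apply]
  exact seq_b2 n

lemma seq_a1_one : seq .a1 1 = .b := rfl

lemma seq_a1 (n : ℕ) : seq .a1 (n+2) = .c := by
  show nxt^[n+2] St.a1 = St.c
  rw [Function.iterate_succ_apply]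
  exact seq_b n

lemma seq_a2_one : seq .a2 1 = .b1 := rfl
lemma seq_a2_two : seq .a2 2 = .b2 := rfl

lemma seq_a2 (n : ℕ) : seq .a2 (n+3) = .c := by
  show nxt^[n+3] St.a2 = St.c
  rw [Function.iterate_succ_apply]
  exact seq_b1 n

/-- The path condition along the unique run. -/
def PC (u v : St → Prop) (q : St) : Prop :=
  ∃ i, v (seq q i) ∧ ∀ j < i, u (seq q j)

lemma sat_eu (φ ψ : CTL) (q : St) :
    CTL.sat K (.eu φ ψ) q ↔ PC (CTL.sat K φ) (CTL.sat K ψ) q := by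
  constructor
  · rintro ⟨ρ, hρ, h0, i, hi, hj⟩
    refine ⟨i, ?_, fun j hj' => ?_⟩
    · rwa [run_eq hρ i, h0] at hi
    · have := hj j hj'; rwa [run_eq hρ j, h0] at this
  · rintro ⟨i, hi, hj⟩
    exact ⟨seq q, seq_run q, rfl, i, hi, hj⟩

lemma sat_au (φ ψ : CTL) (q : St) :
    CTL.sat K (.au φ ψ) q ↔ PC (CTL.sat K φ) (CTL.sat K ψ) q := by
  constructor
  · intro h; exact h (seq q) (seq_run q) rfl
  · rintro ⟨i, hi, hj⟩ ρ hρ h0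
    refine ⟨i, ?_, fun j hj' => ?_⟩
    · rw [run_eq hρ i, h0]; exact hi
    · rw [run_eq hρ j, h0]; exact hj j hj'

section PCequiv

variable {u v : St → Prop}

lemma PC_b2 (hub2 : u .b ↔ u .b2) (hvb2 : v .b ↔ v .b2) :
    PC u v .b ↔ PC u v .b2 := by
  have hu : ∀ i, u (seq .b i) ↔ u (seq .b2 i) := by
    intro i
    rcases i with _ | n
    · exact hub2
    · rw [seq_b n, seq_b2 n]
  have hv : ∀ i, v (seq .b i) ↔ v (seq .b2 i) := by
    intro i
    rcases i with _ | n
    · exact hvb2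
    · rw [seq_b n, seq_b2 n]
  unfold PC
  exact exists_congr fun i => and_congr (hv i) (forall₂_congr fun j _ => hu j)

lemma PC_b1 (hub1 : u .b ↔ u .b1) (hub2 : u .b ↔ u .b2)
    (hvb1 : v .b ↔ v .b1) (hvb2 : v .b ↔ v .b2) :
    PC u v .b ↔ PC u v .b1 := by
  constructor
  · rintro ⟨i, hvi, hui⟩
    rcases i with _ | k
    · exact ⟨0, hvb1.mp hvi, fun j hj => absurd hj (Nat.not_lt_zero j)⟩
    · rw [seq_b k] at hvi
      refine ⟨k+2, by rw [seq_b1 k]; exact hvi, ?_⟩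
      intro j hj
      rcases j with _ | _ | m
      · exact hub1.mp (hui 0 (by omega))
      · exact hub2.mp (hui 0 (by omega))
      · rw [seq_b1 m]
        have := hui 1 (by omega)
        rwa [seq_b 0] at this
  · rintro ⟨i, hvi, hui⟩
    rcases i with _ | _ | k
    · exact ⟨0, hvb1.mpr hvi, fun j hj => absurd hj (Nat.not_lt_zero j)⟩
    · rw [seq_b1_one] at hvi
      exact ⟨0, hvb2.mpr hvi, fun j hj => absurd hj (Nat.not_lt_zero j)⟩
    · rw [seq_b1 k] at hvi
      refine ⟨k+1, by rw [seq_b k]; exact hvi, ?_⟩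
      intro j hj
      rcases j with _ | m
      · exact hub1.mpr (hui 0 (by omega))
      · rw [seq_b m]
        have := hui (m+2) (by omega)
        rwa [seq_b1 m] at this

lemma PC_a (hub1 : u .b ↔ u .b1) (hub2 : u .b ↔ u .b2) (hua : u .a1 ↔ u .a2)
    (hvb1 : v .b ↔ v .b1) (hvb2 : v .b ↔ v .b2) (hva : v .a1 ↔ v .a2) :
    PC u v .a1 ↔ PC u v .a2 := by
  constructor
  · rintro ⟨i, hvi, hui⟩
    rcases i with _ | _ | k
    · exact ⟨0, hva.mp hvi, fun j hj => absurd hj (Nat.not_lt_zero j)⟩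
    · rw [seq_a1_one] at hvi
      refine ⟨1, by rw [seq_a2_one]; exact hvb1.mp hvi, ?_⟩
      intro j hj
      rcases j with _ | m
      · exact hua.mp (hui 0 (by omega))
      · omega
    · rw [seq_a1 k] at hvi
      refine ⟨k+3, by rw [seq_a2 k]; exact hvi, ?_⟩
      intro j hj
      rcases j with _ | _ | _ | m
      · exact hua.mp (hui 0 (by omega))
      · show u (seq .a2 1); rw [seq_a2_one]
        have := hui 1 (by omega)
        rw [seq_a1_one] at this
        exact hub1.mp this
      · show u (seq .a2 2); rw [seq_a2_two]
        have := hui 1 (by omega)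
        rw [seq_a1_one] at this
        exact hub2.mp this
      · rw [seq_a2 m]
        have := hui (m+2) (by omega)
        rwa [seq_a1 m] at this
  · rintro ⟨i, hvi, hui⟩
    rcases i with _ | _ | _ | k
    · exact ⟨0, hva.mpr hvi, fun j hj => absurd hj (Nat.not_lt_zero j)⟩
    · rw [seq_a2_one] at hvi
      refine ⟨1, by rw [seq_a1_one]; exact hvb1.mpr hvi, ?_⟩
      intro j hj
      rcases j with _ | m
      · exact hua.mpr (hui 0 (by omega))
      · omega
    · rw [seq_a2_two] at hvi
      refine ⟨1, by rw [seq_a1_one]; exact hvb2.mpr hvi, ?_⟩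
      intro j hj
      rcases j with _ | m
      · exact hua.mpr (hui 0 (by omega))
      · omega
    · rw [seq_a2 k] at hvi
      refine ⟨k+2, by rw [seq_a1 k]; exact hvi, ?_⟩
      intro j hj
      rcases j with _ | _ | m
      · exact hua.mpr (hui 0 (by omega))
      · show u (seq .a1 1); rw [seq_a1_one]
        have := hui 1 (by omega)
        rw [seq_a2_one] at this
        exact hub1.mpr this
      · rw [seq_a1 m]
        have := hui (m+3) (by omega)
        rwa [seq_a2 m] at this

end PCequiv

/-- Key lemma: the states `b,b1`, `b,b2` and `a1,a2` satisfy the same CTL formulas. -/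
lemma key (φ : CTL) :
    (CTL.sat K φ .b ↔ CTL.sat K φ .b1) ∧ (CTL.sat K φ .b ↔ CTL.sat K φ .b2) ∧
      (CTL.sat K φ .a1 ↔ CTL.sat K φ .a2) := by
  induction φ with
  | atom p => exact ⟨Iff.rfl, Iff.rfl, Iff.rfl⟩
  | and φ ψ ihφ ihψ =>
    exact ⟨and_congr ihφ.1 ihψ.1, and_congr ihφ.2.1 ihψ.2.1, and_congr ihφ.2.2 ihψ.2.2⟩
  | not φ ih =>
    exact ⟨not_congr ih.1, not_congr ih.2.1, not_congr ih.2.2⟩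
  | eu φ ψ ihφ ihψ =>
    obtain ⟨h1, h2, h3⟩ := ihφ
    obtain ⟨g1, g2, g3⟩ := ihψ
    refine ⟨?_, ?_, ?_⟩
    · rw [sat_eu, sat_eu]; exact PC_b1 h1 h2 g1 g2
    · rw [sat_eu, sat_eu]; exact PC_b2 h2 g2
    · rw [sat_eu, sat_eu]; exact PC_a h1 h2 h3 g1 g2 g3
  | au φ ψ ihφ ihψ =>
    obtain ⟨h1, h2, h3⟩ := ihφ
    obtain ⟨g1, g2, g3⟩ := ihψ
    refine ⟨?_, ?_, ?_⟩
    · rw [sat_au, sat_au]; exact PC_b1 h1 h2 g1 g2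
    · rw [sat_au, sat_au]; exact PC_b2 h2 g2
    · rw [sat_au, sat_au]; exact PC_a h1 h2 h3 g1 g2 g3

lemma countSat_append (p : St → Prop) (l m : List St) :
    countSat p (l ++ m) = countSat p l + countSat p m := by
  induction l with
  | nil => simp [countSat]
  | cons a t ih => simp [countSat, ih, add_assoc]

lemma runPrefix_succ (ρ : ℕ → St) (n : ℕ) :
    runPrefix ρ (n+1) = runPrefix ρ n ++ [ρ n] := by
  simp [runPrefix, List.range_succ]

lemma count0 : ∀ n, countSat (fun s => K.label s 0) (runPrefix (seq .a1) n) = min n 1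
  | 0 => by simp [runPrefix, countSat]
  | n+1 => by
    rw [runPrefix_succ, countSat_append, count0 n]
    rcases n with _ | _ | m
    · simp [countSat, K, lab, seq]
    · simp [countSat, K, lab, seq_a1_one]
    · rw [seq_a1 m]; simp [countSat, K, lab]

lemma count1 : ∀ n, countSat (fun s => K.label s 1) (runPrefix (seq .a1) n)
    = if n ≤ 1 then 0 else 1
  | 0 => by simp [runPrefix, countSat]
  | n+1 => by
    rw [runPrefix_succ, countSat_append, count1 n]
    rcases n with _ | _ | m
    · simp [countSat, K, lab, seq]
    · simp [countSat, K, lab, seq_a1_one]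
    · rw [seq_a1 m]; simp [countSat, K, lab]

/-- The property holds at `a1`. -/
lemma prop_a1 : ∀ (ρ : ℕ → St), K.Run ρ → ρ 0 = .a1 → ∀ n : ℕ,
    countSat (fun s => K.label s 1) (runPrefix ρ n) ≤
      countSat (fun s => K.label s 0) (runPrefix ρ n) := by
  intro ρ hρ h0 n
  have hρ' : ρ = seq .a1 := by
    funext i; rw [run_eq hρ i, h0]
  rw [hρ', count0, count1]
  split <;> omega

/-- The property fails at `a2` (via the prefix `a2 b1 b2`). -/
lemma not_prop_a2 :
    ¬ (countSat (fun s => K.label s 1) (runPrefix (seq .a2) 3) ≤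
        countSat (fun s => K.label s 0) (runPrefix (seq .a2) 3)) := by
  have h : runPrefix (seq .a2) 3 = [.a2, .b1, .b2] := by
    simp [runPrefix, List.range_succ]
    exact ⟨rfl, rfl, rfl⟩
  rw [h]
  simp [countSat, K, lab]

end NoCTLAux

/-- no CTL formula expresses, over all Kripke structures, the
property "every finite run prefix from `q` contains at most as many
`B`-states (prop `1`) as `A`-states (prop `0`)", i.e. the CCTL±1 formula
`AG_{#A−#B<0} ⊥` cannot be translated into CTL. -/
theorem no_ctl_for_AG_diag :
    ¬ ∃ φ' : CTL, ∀ (Q : Type) [Fintype Q] (S : Kripke Q) (q : Q),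
      CTL.sat S φ' q ↔
        ∀ (ρ : ℕ → Q), S.Run ρ → ρ 0 = q → ∀ n : ℕ,
          countSat (fun s => S.label s 1) (runPrefix ρ n) ≤
            countSat (fun s => S.label s 0) (runPrefix ρ n) := by
  rintro ⟨φ', h⟩
  open NoCTLAux in
  have h1 : CTL.sat K φ' .a1 := (h St K .a1).mpr prop_a1
  have h2 : CTL.sat K φ' .a2 := (key φ').2.2.mp h1
  have h3 := (h St K .a2).mp h2 (seq .a2) (seq_run .a2) rfl 3
  exact not_prop_a2 h3
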